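/- arXiv:1109.3406 — 4 statements merged into one kernel-verified Lean document; each statement's English description precedes it below -/
import Mathlib

section
/- Let Δ be a real random variable and let r > 0, ρ > 0, σ > 0 and y₀ ∈ ℝ. Assume that for every integer m ≥ 1, E[Δ^{2m}] ≤ (3r)^{2m} ( 4 (2m+1)!! ρ^{2m} + y₀^{2m} + (2m−1)!! σ^{2m} ). Set κ₀ = 1 / ( 108 r² (3ρ² + y₀² + 2σ²) ). Then E[ exp( κ₀ Δ² ) ] ≤ 2. -/
/-!
Expand `exp (κ₀ Δ²) = ∑ κ₀ᵐ Δ²ᵐ / m!` and integrate termwise. Since `(2m+1)‼ ≤ 3ᵐ m!` and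
`(2m-1)‼ ≤ 2ᵐ m!`, the assumed bound on `E Δ²ᵐ` is at most `6 m! (9 r² S)ᵐ` with
`S = 3ρ² + y₀² + 2σ²`, so the `m`-th term of the series is at most `6 / 12ᵐ ≤ 1 / 2ᵐ`
for `m ≥ 1`, while the `0`-th term is `1`; hence the sum is at most `∑ 1 / 2ᵐ = 2`.
-/

open MeasureTheory Real
open scoped Nat

theorem Nat.doubleFactorial_le_doubleFactorial_succ : ∀ n : ℕ, n‼ ≤ (n + 1)‼
  | 0 => le_rfl
  | 1 => by decide
  | n + 2 => by
    rw [Nat.doubleFactorial_add_two, Nat.doubleFactorial_add_two (n + 1)]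
    exact Nat.mul_le_mul (by omega) (Nat.doubleFactorial_le_doubleFactorial_succ n)

theorem Nat.doubleFactorial_two_mul_add_one_le (m : ℕ) : (2 * m + 1)‼ ≤ 3 ^ m * m ! := by
  induction m with
  | zero => rfl
  | succ k ih =>
    rw [show 2 * (k + 1) + 1 = 2 * k + 1 + 2 by ring, Nat.doubleFactorial_add_two,
      Nat.factorial_succ, pow_succ]
    calc (2 * k + 1 + 2) * (2 * k + 1)‼ ≤ (3 * (k + 1)) * (3 ^ k * k !) :=
          Nat.mul_le_mul (by omega) ih
      _ = 3 ^ k * 3 * ((k + 1) * k !) := by ring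

theorem Nat.doubleFactorial_two_mul_sub_one_le (m : ℕ) : (2 * m - 1)‼ ≤ 2 ^ m * m ! := by
  rw [← Nat.doubleFactorial_two_mul]
  cases m with
  | zero => rfl
  | succ k =>
    simpa [Nat.mul_succ] using Nat.doubleFactorial_le_doubleFactorial_succ (2 * k + 1)

theorem moment_bound_le_factorial_mul_pow (r ρ σ y₀ : ℝ) (m : ℕ) :
    (3 * r) ^ (2 * m) * (4 * ((2 * m + 1)‼ : ℝ) * ρ ^ (2 * m) + y₀ ^ (2 * m) +
      ((2 * m - 1)‼ : ℝ) * σ ^ (2 * m)) ≤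
      6 * m ! * (9 * r ^ 2 * (3 * ρ ^ 2 + y₀ ^ 2 + 2 * σ ^ 2)) ^ m := by
  set S := 3 * ρ ^ 2 + y₀ ^ 2 + 2 * σ ^ 2
  have hm : (1 : ℝ) ≤ m ! := mod_cast m.factorial_pos
  have hodd : ((2 * m + 1)‼ : ℝ) * ρ ^ (2 * m) ≤ m ! * (3 * ρ ^ 2) ^ m := by
    have : ((2 * m + 1)‼ : ℝ) ≤ 3 ^ m * m ! := mod_cast Nat.doubleFactorial_two_mul_add_one_le m
    rw [pow_mul, mul_pow]
    nlinarith [pow_nonneg (sq_nonneg ρ) m]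
  have heven : ((2 * m - 1)‼ : ℝ) * σ ^ (2 * m) ≤ m ! * (2 * σ ^ 2) ^ m := by
    have : ((2 * m - 1)‼ : ℝ) ≤ 2 ^ m * m ! := mod_cast Nat.doubleFactorial_two_mul_sub_one_le m
    rw [pow_mul, mul_pow]
    nlinarith [pow_nonneg (sq_nonneg σ) m]
  have hy : y₀ ^ (2 * m) ≤ m ! * (y₀ ^ 2) ^ m := by
    rw [pow_mul]
    exact le_mul_of_one_le_left (by positivity) hm
  have hS₁ : (3 * ρ ^ 2) ^ m ≤ S ^ m := by gcongr; nlinarith [sq_nonneg y₀, sq_nonneg σ]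
  have hS₂ : (y₀ ^ 2) ^ m ≤ S ^ m := by gcongr; nlinarith [sq_nonneg ρ, sq_nonneg σ]
  have hS₃ : (2 * σ ^ 2) ^ m ≤ S ^ m := by gcongr; nlinarith [sq_nonneg ρ, sq_nonneg y₀]
  have hm₀ : (0 : ℝ) ≤ m ! := by positivity
  have hsum : 4 * ((2 * m + 1)‼ : ℝ) * ρ ^ (2 * m) + y₀ ^ (2 * m) +
      ((2 * m - 1)‼ : ℝ) * σ ^ (2 * m) ≤ m ! * (6 * S ^ m) := by
    nlinarith [mul_le_mul_of_nonneg_left hS₁ hm₀, mul_le_mul_of_nonneg_left hS₂ hm₀,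
      mul_le_mul_of_nonneg_left hS₃ hm₀]
  have h9 : (3 * r) ^ (2 * m) = (9 * r ^ 2) ^ m := by rw [pow_mul]; ring
  calc (3 * r) ^ (2 * m) * (4 * ((2 * m + 1)‼ : ℝ) * ρ ^ (2 * m) + y₀ ^ (2 * m) +
        ((2 * m - 1)‼ : ℝ) * σ ^ (2 * m))
      ≤ (9 * r ^ 2) ^ m * (m ! * (6 * S ^ m)) := by rw [h9]; gcongr
    _ = 6 * m ! * (9 * r ^ 2 * S) ^ m := by rw [mul_pow _ S]; ring

theorem pow_div_factorial_mul_moment_bound_le {κ r ρ σ y₀ : ℝ} (hκ : 0 ≤ κ)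
    (hκS : κ * (9 * r ^ 2 * (3 * ρ ^ 2 + y₀ ^ 2 + 2 * σ ^ 2)) ≤ 1 / 12) {m : ℕ} (hm : 1 ≤ m) :
    κ ^ m / m ! * ((3 * r) ^ (2 * m) * (4 * ((2 * m + 1)‼ : ℝ) * ρ ^ (2 * m) + y₀ ^ (2 * m) +
      ((2 * m - 1)‼ : ℝ) * σ ^ (2 * m))) ≤ (1 / 2) ^ m := by
  set S := 3 * ρ ^ 2 + y₀ ^ 2 + 2 * σ ^ 2
  have h6 : (6 : ℝ) * (1 / 6) ^ m ≤ 1 := by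
    have := pow_le_pow_of_le_one (by norm_num : (0 : ℝ) ≤ 1 / 6) (by norm_num) hm
    linarith [pow_one (1 / 6 : ℝ)]
  calc κ ^ m / m ! * ((3 * r) ^ (2 * m) * (4 * ((2 * m + 1)‼ : ℝ) * ρ ^ (2 * m) + y₀ ^ (2 * m) +
        ((2 * m - 1)‼ : ℝ) * σ ^ (2 * m)))
      ≤ κ ^ m / m ! * (6 * m ! * (9 * r ^ 2 * S) ^ m) := by
        gcongr ?_ * ?_
        exact moment_bound_le_factorial_mul_pow r ρ σ y₀ m
    _ = 6 * (κ * (9 * r ^ 2 * S)) ^ m := by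
        rw [mul_pow κ]
        field_simp
    _ ≤ 6 * (1 / 12) ^ m := by gcongr
    _ = (1 / 2) ^ m * (6 * (1 / 6) ^ m) := by rw [mul_left_comm, ← mul_pow]; norm_num
    _ ≤ (1 / 2) ^ m := mul_le_of_le_one_right (by positivity) h6

theorem lintegral_ofReal_exp_mul_sq_eq_tsum {Ω : Type*} [MeasurableSpace Ω] (μ : Measure Ω)
    {f : Ω → ℝ} (hf : Measurable f) {κ : ℝ} (hκ : 0 ≤ κ) :
    ∫⁻ ω, ENNReal.ofReal (exp (κ * f ω ^ 2)) ∂μ =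
      ∑' m : ℕ, ENNReal.ofReal (κ ^ m / m !) * ∫⁻ ω, ENNReal.ofReal (f ω ^ (2 * m)) ∂μ := by
  have hseries : ∀ ω, ENNReal.ofReal (exp (κ * f ω ^ 2)) =
      ∑' m : ℕ, ENNReal.ofReal (κ ^ m / m !) * ENNReal.ofReal (f ω ^ (2 * m)) := by
    intro ω
    rw [exp_eq_exp_ℝ, NormedSpace.exp_eq_tsum_div,
      ENNReal.ofReal_tsum_of_nonneg (fun m => by positivity) (summable_pow_div_factorial _)]
    congr with m
    rw [← ENNReal.ofReal_mul (by positivity), mul_pow, pow_mul]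
    ring_nf
  simp_rw [hseries]
  rw [lintegral_tsum fun m => by fun_prop]
  congr with m
  exact lintegral_const_mul' _ _ ENNReal.ofReal_ne_top

theorem exponential_moment_bound_general
    {Ω : Type*} [MeasurableSpace Ω] (μ : Measure Ω) [IsProbabilityMeasure μ]
    (Δ : Ω → ℝ) (hΔ : Measurable Δ)
    (r ρ σ y₀ : ℝ)
    (hmom : ∀ m : ℕ, 1 ≤ m →
      ∫⁻ ω, ENNReal.ofReal (Δ ω ^ (2 * m)) ∂μ ≤
        ENNReal.ofReal ((3 * r) ^ (2 * m) *
          (4 * (Nat.doubleFactorial (2 * m + 1) : ℝ) * ρ ^ (2 * m) + y₀ ^ (2 * m) +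
            (Nat.doubleFactorial (2 * m - 1) : ℝ) * σ ^ (2 * m)))) :
    ∫⁻ ω, ENNReal.ofReal
        (Real.exp (1 / (108 * r ^ 2 * (3 * ρ ^ 2 + y₀ ^ 2 + 2 * σ ^ 2)) * Δ ω ^ 2)) ∂μ
      ≤ 2 := by
  set S := 3 * ρ ^ 2 + y₀ ^ 2 + 2 * σ ^ 2
  set κ := 1 / (108 * r ^ 2 * S)
  have hκ : 0 ≤ κ := by positivity
  -- only an inequality: `κ = 0` when `r = 0` or `S = 0`
  have hκS : κ * (9 * r ^ 2 * S) ≤ 1 / 12 := by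
    have : κ * (108 * r ^ 2 * S) ≤ 1 := by rw [one_div_mul_eq_div]; exact div_self_le_one _
    linarith
  have hterm : ∀ m : ℕ, ENNReal.ofReal (κ ^ m / m !) * ∫⁻ ω, ENNReal.ofReal (Δ ω ^ (2 * m)) ∂μ ≤
      ENNReal.ofReal ((1 / 2) ^ m) := by
    rintro (_ | m)
    · simp
    calc ENNReal.ofReal (κ ^ (m + 1) / (m + 1)!) * ∫⁻ ω, ENNReal.ofReal (Δ ω ^ (2 * (m + 1))) ∂μ
        ≤ ENNReal.ofReal (κ ^ (m + 1) / (m + 1)!) * ENNReal.ofReal _ := by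
          gcongr; exact hmom (m + 1) (by omega)
      _ ≤ ENNReal.ofReal ((1 / 2) ^ (m + 1)) := by
          rw [← ENNReal.ofReal_mul (by positivity)]
          exact ENNReal.ofReal_le_ofReal
            (pow_div_factorial_mul_moment_bound_le hκ hκS (by omega))
  calc _ = ∑' m : ℕ, ENNReal.ofReal (κ ^ m / m !) * ∫⁻ ω, ENNReal.ofReal (Δ ω ^ (2 * m)) ∂μ :=
        lintegral_ofReal_exp_mul_sq_eq_tsum μ hΔ hκ
    _ ≤ ∑' m : ℕ, ENNReal.ofReal ((1 / 2) ^ m) := ENNReal.tsum_le_tsum hterm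
    _ = 2 := by
        rw [← ENNReal.ofReal_tsum_of_nonneg (fun m => by positivity) summable_geometric_two,
          tsum_geometric_two, ENNReal.ofReal_ofNat]

/-- From the moment bounds
`E Δ^{2m} ≤ (3r)^{2m} (4 (2m+1)!! ρ^{2m} + y₀^{2m} + (2m−1)!! σ^{2m})`
one gets the exponential moment bound `E exp(κ₀ Δ²) ≤ 2` with
`κ₀ = 1/(108 r² (3ρ² + y₀² + 2σ²))`. -/
theorem exponential_moment_bound
    {Ω : Type*} [MeasurableSpace Ω] (μ : Measure Ω) [IsProbabilityMeasure μ]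
    (Δ : Ω → ℝ) (hΔ : Measurable Δ)
    (r ρ σ y₀ : ℝ) (hr : 0 < r) (hρ : 0 < ρ) (hσ : 0 < σ)
    (hmom : ∀ m : ℕ, 1 ≤ m →
      ∫⁻ ω, ENNReal.ofReal (Δ ω ^ (2 * m)) ∂μ ≤
        ENNReal.ofReal ((3 * r) ^ (2 * m) *
          (4 * (Nat.doubleFactorial (2 * m + 1) : ℝ) * ρ ^ (2 * m) + y₀ ^ (2 * m) +
            (Nat.doubleFactorial (2 * m - 1) : ℝ) * σ ^ (2 * m)))) :
    ∫⁻ ω, ENNReal.ofReal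
        (Real.exp (1 / (108 * r ^ 2 * (3 * ρ ^ 2 + y₀ ^ 2 + 2 * σ ^ 2)) * Δ ω ^ 2)) ∂μ
      ≤ 2 :=
  exponential_moment_bound_general μ Δ hΔ r ρ σ y₀ hmom
end

section
/- Let S ∈ Σ_{L,M} and set K = 2 (x* + M L). Then for every x ∈ ℝ with |x| > K, S(x)/x ≤ −1/(2L). -/
/-!
Beyond `x*` the slope of `S` is at most `-1/L`, so for `x ≥ x*` the mean value inequality gives
`S x ≤ S x* - (x - x*)/L ≤ M - (x - x*)/L`, which is at most `-x/(2L)` as soon as `x ≥ 2(x* + ML)`.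
The case `x ≤ -x*` is the same estimate for the reflected function `t ↦ -S(-t)`, which lies in the
same class.
-/

lemma div_le_neg_inv_two_mul_of_deriv_le {f : ℝ → ℝ} {a M L : ℝ} (ha : 0 ≤ a) (hM : 0 ≤ M)
    (hL : 0 < L) (hf : Differentiable ℝ f) (hfa : f a ≤ M)
    (hderiv : ∀ t, a < t → deriv f t ≤ -L⁻¹) {x : ℝ} (hx : 2 * (a + M * L) < x) :
    f x / x ≤ -(1 / (2 * L)) := by
  have hax : a ≤ x := by nlinarith
  have hdecay : f x - f a ≤ -L⁻¹ * (x - a) :=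
    (convex_Ici a).image_sub_le_mul_sub_of_deriv_le hf.continuous.continuousOn
      hf.differentiableOn (fun t ht ↦ hderiv t (by simpa using ht)) a Set.self_mem_Ici x hax hax
  rw [div_le_iff₀ (by nlinarith)]
  field_simp at hdecay ⊢
  nlinarith

lemma deriv_neg_comp_neg (f : ℝ → ℝ) (x : ℝ) : deriv (fun t ↦ -f (-t)) x = deriv f (-x) := by
  rw [deriv.fun_neg, deriv_comp_neg, neg_neg]

/-- Drift condition far from the origin: for `S ∈ Σ_{L,M}` and
`K = 2(x* + ML)`, one has `S(x)/x ≤ −1/(2L)` whenever `|x| > K`. -/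
theorem drift_ratio_bound
    (xstar M L : ℝ) (hxstar : 1 ≤ xstar) (hM : 0 < M) (hL : 1 < L)
    (S : ℝ → ℝ) (hS : ContDiff ℝ 1 S)
    (hSM : ∀ x : ℝ, |x| ≤ xstar → |S x| + |deriv S x| ≤ M)
    (hSL : ∀ x : ℝ, xstar ≤ |x| → -L ≤ deriv S x ∧ deriv S x ≤ -L⁻¹) :
    ∀ x : ℝ, 2 * (xstar + M * L) < |x| → S x / x ≤ -(1 / (2 * L)) := by
  intro x hx
  have hS' : Differentiable ℝ S := hS.differentiable one_ne_zero
  have hS_edge (y : ℝ) (hy : |y| = xstar) : |S y| ≤ M :=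
    (le_add_of_nonneg_right (abs_nonneg _)).trans (hSM y hy.le)
  have hslope (t : ℝ) (ht : xstar < |t|) : deriv S t ≤ -L⁻¹ := (hSL t ht.le).2
  have hx0 : x ≠ 0 := by
    rintro rfl
    have : 0 < M * L := by positivity
    simp only [abs_zero] at hx
    linarith
  rcases hx0.lt_or_gt with hneg | hpos
  · have hreflect : (fun t ↦ -S (-t)) (-x) / -x = S x / x := by simp [neg_div_neg_eq]
    rw [← hreflect]
    refine div_le_neg_inv_two_mul_of_deriv_le (f := fun t ↦ -S (-t)) (a := xstar) (L := L)
      (by linarith) hM.le (by linarith) (by fun_prop) ?_ (fun t ht ↦ ?_)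
      (by rwa [abs_of_neg hneg] at hx)
    · exact (neg_le_abs _).trans (hS_edge (-xstar) (by rw [abs_neg, abs_of_pos (by linarith)]))
    · rw [deriv_neg_comp_neg]
      exact hslope _ (by rw [abs_of_neg (by linarith)]; linarith)
  · refine div_le_neg_inv_two_mul_of_deriv_le (a := xstar) (by linarith) hM.le (by linarith) hS'
      ?_ (fun t ht ↦ hslope t ?_) (by rwa [abs_of_pos hpos] at hx)
    · exact (le_abs_self _).trans (hS_edge xstar (abs_of_pos (by linarith)))
    · rwa [abs_of_pos (by linarith)]
end

section
/- Let S ∈ Σ_{L,M}. Then for every integer m ≥ 1 and every x ∈ ℝ, x^{2m−1} S(x) ≤ A_m − x^{2m} / (2L), where A_m = ( 2 (x* + M L) )^{2m−1} · ( 2M + x* (L + L^{−1}) + 2 L² M ). -/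
/-!
Put `ε = L⁻¹`. Since `S' ≤ -ε` on both tails, the mean value theorem from `±x*` gives the drift
inequality `x S(x) ≤ |x| (M + ε x*) - ε x²` for `|x| ≥ x*`, and it holds trivially for
`|x| ≤ x*`. Multiplying by the even power `x^(2m-2)` and moving half of the `-ε x^(2m)` term
to the right leaves `|x|^(2m-1) (b - ε|x|/2)` with `b = M + ε x*`, which is nonpositive once
`|x| ≥ 2b/ε = 2(x* + ML)` and at most `(2(x* + ML))^(2m-1) b` otherwise.
-/

open Set

lemma mul_le_abs_mul_sub_sq_of_deriv_le {f : ℝ → ℝ} {a B ε : ℝ} (hf : Differentiable ℝ f)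
    (ha : 0 ≤ a) (hε : 0 ≤ ε) (hbdd : ∀ x, |x| ≤ a → |f x| ≤ B)
    (hderiv : ∀ x, a ≤ |x| → deriv f x ≤ -ε) (x : ℝ) :
    x * f x ≤ |x| * (B + ε * a) - ε * x ^ 2 := by
  have hdecay : ∀ {D : Set ℝ}, Convex ℝ D → (∀ t ∈ interior D, a ≤ |t|) →
      ∀ u ∈ D, ∀ v ∈ D, u ≤ v → f v - f u ≤ -ε * (v - u) := fun hD hDa =>
    hD.image_sub_le_mul_sub_of_deriv_le hf.continuous.continuousOn hf.differentiableOn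
      fun t ht => hderiv t (hDa t ht)
  rcases le_or_gt a x with hax | hxa
  · have := hdecay (convex_Ici a)
      (fun t ht => (interior_Ici.subset ht).out.le.trans (le_abs_self t))
      a self_mem_Ici x hax hax
    have hfa := (le_abs_self _).trans (hbdd a (abs_of_nonneg ha).le)
    have hfx : f x ≤ B + ε * a - ε * x := by linarith
    have := mul_le_mul_of_nonneg_left hfx (ha.trans hax)
    rw [abs_of_nonneg (ha.trans hax)]
    linarith
  rcases le_or_gt x (-a) with hxa' | hxa'
  · have := hdecay (convex_Iic (-a))
      (fun t ht => (le_neg.mpr (interior_Iic.subset ht).out.le).trans (neg_le_abs t))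
      x hxa' (-a) self_mem_Iic hxa'
    have hfa := neg_le_of_abs_le (hbdd (-a) (by rw [abs_neg, abs_of_nonneg ha]))
    have hfx : -B - ε * a - ε * x ≤ f x := by linarith
    have := mul_le_mul_of_nonpos_left hfx (by linarith : x ≤ 0)
    rw [abs_of_neg (by linarith)]
    linarith
  · have hxa_abs : |x| ≤ a := abs_le.mpr ⟨hxa'.le, hxa.le⟩
    have hfx : x * f x ≤ |x| * B :=
      calc x * f x ≤ |x| * |f x| := (le_abs_self _).trans (abs_mul x (f x)).le
        _ ≤ |x| * B := by gcongr; exact hbdd x hxa_abs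
    nlinarith [abs_nonneg x, sq_abs x, mul_nonneg hε (abs_nonneg x)]

lemma pow_mul_sub_half_le {y b ε : ℝ} (hy : 0 ≤ y) (hb : 0 ≤ b) (hε : 0 < ε) (n : ℕ) :
    y ^ n * (b - ε * y / 2) ≤ (2 * b / ε) ^ n * b := by
  rcases le_or_gt y (2 * b / ε) with hyb | hyb
  · have hyn : y ^ n ≤ (2 * b / ε) ^ n := pow_le_pow_left₀ hy hyb n
    calc y ^ n * (b - ε * y / 2) ≤ y ^ n * b := by
          gcongr; linarith [mul_nonneg hε.le hy]
      _ ≤ (2 * b / ε) ^ n * b := by gcongr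
  · have hneg : b - ε * y / 2 < 0 := by
      rw [div_lt_iff₀ hε] at hyb; linarith
    calc y ^ n * (b - ε * y / 2) ≤ 0 :=
          mul_nonpos_of_nonneg_of_nonpos (pow_nonneg hy n) hneg.le
      _ ≤ (2 * b / ε) ^ n * b := by positivity

lemma odd_pow_mul_le_of_mul_le {x s b ε : ℝ} (hb : 0 ≤ b) (hε : 0 < ε)
    (h : x * s ≤ |x| * b - ε * x ^ 2) (k : ℕ) :
    x ^ (2 * k + 1) * s ≤ (2 * b / ε) ^ (2 * k + 1) * b - ε * x ^ (2 * k + 2) / 2 := by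
  have hodd : x ^ (2 * k + 1) * s ≤ |x| ^ (2 * k) * (|x| * b - ε * x ^ 2) := by
    rw [pow_succ, pow_mul, pow_mul, sq_abs, mul_assoc]
    exact mul_le_mul_of_nonneg_left h (pow_nonneg (sq_nonneg x) k)
  have heven : x ^ (2 * k + 2) = |x| ^ (2 * k) * x ^ 2 := by
    rw [pow_add, pow_mul, pow_mul, sq_abs]
  have hsplit : |x| ^ (2 * k) * (|x| * b - ε * x ^ 2) + ε * x ^ (2 * k + 2) / 2
      = |x| ^ (2 * k + 1) * (b - ε * |x| / 2) := by
    rw [heven, ← sq_abs x]; ring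
  linarith [pow_mul_sub_half_le (abs_nonneg x) hb hε (2 * k + 1)]

theorem drift_lyapunov_bound_general
    (xstar M L : ℝ) (hxstar : 1 ≤ xstar) (hL : 1 < L)
    (S : ℝ → ℝ) (hS : ContDiff ℝ 1 S)
    (hSM : ∀ x : ℝ, |x| ≤ xstar → |S x| + |deriv S x| ≤ M)
    (hSL : ∀ x : ℝ, xstar ≤ |x| → -L ≤ deriv S x ∧ deriv S x ≤ -L⁻¹) :
    ∀ m : ℕ, 1 ≤ m → ∀ x : ℝ,
      x ^ (2 * m - 1) * S x ≤
        (2 * (xstar + M * L)) ^ (2 * m - 1) *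
            (2 * M + xstar * (L + L⁻¹) + 2 * L ^ 2 * M)
          - x ^ (2 * m) / (2 * L) := by
  intro m hm x
  obtain ⟨k, rfl⟩ := Nat.exists_eq_add_of_le' hm
  have hxstar0 : 0 ≤ xstar := by linarith
  have hL0 : 0 < L := by linarith
  have hSbdd : ∀ x, |x| ≤ xstar → |S x| ≤ M := fun x hx =>
    (le_add_of_nonneg_right (abs_nonneg _)).trans (hSM x hx)
  have hM : 0 ≤ M := (abs_nonneg _).trans (hSbdd xstar (abs_of_nonneg hxstar0).le)
  have hdrift := mul_le_abs_mul_sub_sq_of_deriv_le (hS.differentiable one_ne_zero) hxstar0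
    (inv_nonneg.mpr hL0.le) hSbdd (fun x hx => (hSL x hx).2) x
  have hbound := odd_pow_mul_le_of_mul_le (by positivity) (inv_pos.mpr hL0) hdrift k
  have hC : 2 * (M + L⁻¹ * xstar) / L⁻¹ = 2 * (xstar + M * L) := by field_simp; ring
  have hD : M + L⁻¹ * xstar ≤ 2 * M + xstar * (L + L⁻¹) + 2 * L ^ 2 * M := by
    nlinarith [mul_nonneg hxstar0 hL0.le, mul_nonneg (sq_nonneg L) hM]
  rw [hC] at hbound
  rw [show 2 * (k + 1) - 1 = 2 * k + 1 by omega, show 2 * (k + 1) = 2 * k + 2 by ring,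
    div_mul_eq_div_div_swap, div_eq_inv_mul _ L]
  calc x ^ (2 * k + 1) * S x
      ≤ (2 * (xstar + M * L)) ^ (2 * k + 1) * (M + L⁻¹ * xstar) - L⁻¹ * x ^ (2 * k + 2) / 2 :=
        hbound
    _ ≤ _ := by gcongr

/-- Lyapunov-type bound: for `S ∈ Σ_{L,M}`, every integer `m ≥ 1` and every `x`,
`x^{2m−1} S(x) ≤ A_m − x^{2m}/(2L)` with
`A_m = (2(x* + ML))^{2m−1} (2M + x*(L + L⁻¹) + 2L²M)`. -/
theorem drift_lyapunov_bound
    (xstar M L : ℝ) (hxstar : 1 ≤ xstar) (hM : 0 < M) (hL : 1 < L)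
    (S : ℝ → ℝ) (hS : ContDiff ℝ 1 S)
    (hSM : ∀ x : ℝ, |x| ≤ xstar → |S x| + |deriv S x| ≤ M)
    (hSL : ∀ x : ℝ, xstar ≤ |x| → -L ≤ deriv S x ∧ deriv S x ≤ -L⁻¹) :
    ∀ m : ℕ, 1 ≤ m → ∀ x : ℝ,
      x ^ (2 * m - 1) * S x ≤
        (2 * (xstar + M * L)) ^ (2 * m - 1) *
            (2 * M + xstar * (L + L⁻¹) + 2 * L ^ 2 * M)
          - x ^ (2 * m) / (2 * L) :=
  drift_lyapunov_bound_general xstar M L hxstar hL S hS hSM hSL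
end

section
/- Let L > 1, σ_max > 0, y₀ ∈ ℝ and let (A_m)_{m ≥ 1} be nonnegative real numbers. Suppose that for each integer m ≥ 0 there is a C¹ function z_m : [0, ∞) → [0, ∞) with z_0(t) = 1 for all t, z_m(0) = y₀^{2m}, and such that for every m ≥ 1 and every t ≥ 0, z_m'(t) ≤ 2 m A_m − (m/L) z_m(t) + m (2m−1) σ_max² z_{m−1}(t). Then for every m ≥ 1, sup_{t ≥ 0} z_m(t) ≤ (2m−1)!! · Σ_{j=0}^{m} (σ_max² L)^{m−j} B_j, where B_0 = 1 and B_j = y₀^{2j} + 2 A_j L for j ≥ 1. -/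
/-!
Each `z_m` obeys a linear differential inequality `z' ≤ a - b z` with `b = m / L > 0`, once the
forcing term `z_{m-1}` is replaced by its bound from the previous step; such a `z` never exceeds
`max (z 0) (a / b)`. Unfolding this recursion in `m`, the factor `(2m - 1)` produced by the
coefficient `m (2m - 1)` accumulates to `(2m - 1)‼`.
-/

open Finset Real
open scoped Nat

theorem le_max_of_deriv_le_sub_mul {f : ℝ → ℝ} {a b t : ℝ} (hf : Differentiable ℝ f) (hb : 0 < b)
    (hd : ∀ s, 0 ≤ s → deriv f s ≤ a - b * f s) (ht : 0 ≤ t) :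
    f t ≤ max (f 0) (a / b) := by
  have hgronwall := le_gronwallBound_of_liminf_deriv_right_le (f' := deriv f) (K := -b) (ε := a)
    hf.continuous.continuousOn
    (fun s _ r hr => (hf s).hasDerivAt.hasDerivWithinAt.liminf_right_slope_le hr) le_rfl
    (fun s hs => by linarith [hd s hs.1]) t ⟨ht, le_rfl⟩
  rw [gronwallBound_of_K_ne_0 (neg_ne_zero.mpr hb.ne'), sub_zero] at hgronwall
  dsimp only at hgronwall
  -- Grönwall's bound is the convex combination `e * f 0 + (1 - e) * (a / b)`.
  set e := exp (-b * t)
  have he1 : e ≤ 1 := exp_le_one_iff.mpr (by nlinarith)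
  calc f t ≤ e * f 0 + (1 - e) * (a / b) := hgronwall.trans_eq (by field_simp; ring)
    _ ≤ e * max (f 0) (a / b) + (1 - e) * max (f 0) (a / b) := by
      gcongr
      · exact le_max_left _ _
      · exact le_max_right _ _
    _ = max (f 0) (a / b) := by ring

theorem le_max_of_deriv_le_mul_sub_of_le {f g : ℝ → ℝ} {k L α β M t : ℝ} (hf : Differentiable ℝ f)
    (hk : 0 < k) (hL : 0 < L) (hβ : 0 ≤ β) (hg : ∀ s, 0 ≤ s → g s ≤ M)
    (hd : ∀ s, 0 ≤ s → deriv f s ≤ k * α - k / L * f s + k * β * g s) (ht : 0 ≤ t) :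
    f t ≤ max (f 0) (L * (α + β * M)) := by
  have hlin : ∀ s, 0 ≤ s → deriv f s ≤ k * (α + β * M) - k / L * f s := fun s hs =>
    calc deriv f s ≤ k * α - k / L * f s + k * β * g s := hd s hs
      _ ≤ k * α - k / L * f s + k * β * M := by gcongr; exact hg s hs
      _ = k * (α + β * M) - k / L * f s := by ring
  convert le_max_of_deriv_le_sub_mul hf (by positivity) hlin ht using 2
  field_simp

theorem sum_range_succ_pow_sub_mul {R : Type*} [CommSemiring R] (q : R) (B : ℕ → R) (m : ℕ) :
    ∑ j ∈ range (m + 1 + 1), q ^ (m + 1 - j) * B j =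
      q * ∑ j ∈ range (m + 1), q ^ (m - j) * B j + B (m + 1) := by
  rw [sum_range_succ, Nat.sub_self, pow_zero, one_mul, mul_sum]
  congr 1
  refine sum_congr rfl fun j hj => ?_
  rw [Nat.sub_add_comm (mem_range_succ_iff.mp hj), pow_succ']
  ring

def momentWeight (y₀ L : ℝ) (A : ℕ → ℝ) (j : ℕ) : ℝ :=
  if j = 0 then 1 else y₀ ^ (2 * j) + 2 * A j * L

theorem momentWeight_nonneg {y₀ L : ℝ} {A : ℕ → ℝ} (hL : 0 ≤ L) (hA : ∀ m, 0 ≤ A m) (j : ℕ) :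
    0 ≤ momentWeight y₀ L A j := by
  unfold momentWeight
  split_ifs
  · exact zero_le_one
  · have := hA j
    have := (even_two_mul j).pow_nonneg y₀
    positivity

theorem max_le_mul_add_add {x u P D : ℝ} (hx : 0 ≤ x) (hu : 0 ≤ u) (hP : 0 ≤ P) (hD : 1 ≤ D) :
    max x (u + D * P) ≤ D * (P + (x + u)) := by
  apply max_le <;> nlinarith

theorem moment_recursion_bound_general
    (L σmax y₀ : ℝ) (hL : 1 < L)
    (A : ℕ → ℝ) (hA : ∀ m, 0 ≤ A m)
    (z : ℕ → ℝ → ℝ)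
    (hzC1 : ∀ m, ContDiff ℝ 1 (z m))
    (hz0 : ∀ t : ℝ, z 0 t = 1)
    (hzinit : ∀ m : ℕ, z m 0 = y₀ ^ (2 * m))
    (hderiv : ∀ m : ℕ, 1 ≤ m → ∀ t : ℝ, 0 ≤ t →
      deriv (z m) t ≤ 2 * (m : ℝ) * A m - ((m : ℝ) / L) * z m t
        + (m : ℝ) * (2 * (m : ℝ) - 1) * σmax ^ 2 * z (m - 1) t) :
    ∀ m : ℕ, 1 ≤ m → ∀ t : ℝ, 0 ≤ t →
      z m t ≤ (Nat.doubleFactorial (2 * m - 1) : ℝ) *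
        ∑ j ∈ Finset.range (m + 1),
          (σmax ^ 2 * L) ^ (m - j) *
            (if j = 0 then 1 else y₀ ^ (2 * j) + 2 * A j * L) := by
  have hL₀ : 0 < L := by linarith
  suffices key : ∀ m t, 0 ≤ t → z m t ≤ (2 * m - 1)‼ *
      ∑ j ∈ range (m + 1), (σmax ^ 2 * L) ^ (m - j) * momentWeight y₀ L A j from
    fun m _ t ht => key m t ht
  intro m
  induction m with
  | zero => simp [hz0, momentWeight]
  | succ m ih =>
    intro t ht
    set S := ∑ j ∈ range (m + 1), (σmax ^ 2 * L) ^ (m - j) * momentWeight y₀ L A j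
    have hS : 0 ≤ S := sum_nonneg fun j _ => by
      have := momentWeight_nonneg (y₀ := y₀) hL₀.le hA j
      positivity
    have hstep := le_max_of_deriv_le_mul_sub_of_le (hzC1 (m + 1)).differentiable_one
      (k := m + 1) (α := 2 * A (m + 1)) (β := (2 * m + 1) * σmax ^ 2) (by positivity) hL₀
      (by positivity) ih (fun s hs =>
        (hderiv (m + 1) (by omega) s hs).trans_eq (by push_cast [Nat.add_sub_cancel]; ring)) ht
    rw [hzinit] at hstep
    have hD : (1 : ℝ) ≤ (2 * m + 1 : ℕ) * (2 * m - 1)‼ := by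
      exact_mod_cast Nat.one_le_iff_ne_zero.mpr (by positivity)
    rw [sum_range_succ_pow_sub_mul, show 2 * (m + 1) - 1 = 2 * m + 1 by omega,
      Nat.doubleFactorial_add_one, Nat.cast_mul]
    calc z (m + 1) t ≤ max (y₀ ^ (2 * (m + 1)))
          (2 * A (m + 1) * L + (2 * m + 1 : ℕ) * (2 * m - 1)‼ * (σmax ^ 2 * L * S)) :=
        hstep.trans_eq (by push_cast; congr 1; ring)
      _ ≤ _ := max_le_mul_add_add ((even_two_mul _).pow_nonneg y₀)
          (by have := hA (m + 1); positivity) (by positivity) hD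
      _ = _ := by rw [momentWeight, if_neg m.succ_ne_zero]

/-- Deterministic recursion underlying the uniform moment bound:
if `z_0 ≡ 1`, `z_m(0) = y₀^{2m}` and
`z_m'(t) ≤ 2 m A_m − (m/L) z_m(t) + m(2m−1) σmax² z_{m−1}(t)` for `t ≥ 0`,
then `sup_{t ≥ 0} z_m(t) ≤ (2m−1)!! ∑_{j=0}^m (σmax² L)^{m−j} B_j`
with `B_0 = 1`, `B_j = y₀^{2j} + 2 A_j L`. -/
theorem moment_recursion_bound
    (L σmax y₀ : ℝ) (hL : 1 < L) (hσ : 0 < σmax)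
    (A : ℕ → ℝ) (hA : ∀ m, 0 ≤ A m)
    (z : ℕ → ℝ → ℝ)
    (hzC1 : ∀ m, ContDiff ℝ 1 (z m))
    (hznn : ∀ m, ∀ t : ℝ, 0 ≤ t → 0 ≤ z m t)
    (hz0 : ∀ t : ℝ, z 0 t = 1)
    (hzinit : ∀ m : ℕ, z m 0 = y₀ ^ (2 * m))
    (hderiv : ∀ m : ℕ, 1 ≤ m → ∀ t : ℝ, 0 ≤ t →
      deriv (z m) t ≤ 2 * (m : ℝ) * A m - ((m : ℝ) / L) * z m t
        + (m : ℝ) * (2 * (m : ℝ) - 1) * σmax ^ 2 * z (m - 1) t) :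
    ∀ m : ℕ, 1 ≤ m → ∀ t : ℝ, 0 ≤ t →
      z m t ≤ (Nat.doubleFactorial (2 * m - 1) : ℝ) *
        ∑ j ∈ Finset.range (m + 1),
          (σmax ^ 2 * L) ^ (m - j) *
            (if j = 0 then 1 else y₀ ^ (2 * j) + 2 * A j * L) :=
  moment_recursion_bound_general L σmax y₀ hL A hA z hzC1 hz0 hzinit hderiv
end
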